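/- The series B defined by B = Y − w(Y/B) − (B∖Y) − w(Y/B∖Y) equals Σ_{p,q ≥ 0} (−1)^{p+q} w^p (c_p / Y ∖ d_q), where c_p is the left comb with p vertices and d_q is the right comb with q vertices. -/

import Mathlib

/-- Planar binary trees: a leaf, or an internal vertex with two subtrees. -/
inductive PBT : Type
  | leaf : PBT
  | node : PBT → PBT → PBT
  deriving DecidableEq

namespace PBT

/-- Number of internal vertices of a planar binary tree. -/
def size : PBT → ℕ
  | leaf => 0
  | node l r => size l + size r + 1

/-- `under u v` ("u ∖ v") grafts `v` at the rightmost leaf of `u`. -/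
def under : PBT → PBT → PBT
  | leaf, v => v
  | node l r, v => node l (under r v)

/-- `over u v` ("u / v") grafts `u` at the leftmost leaf of `v`. -/
def overProd (u : PBT) : PBT → PBT
  | leaf => u
  | node l r => node (overProd u l) r

/-- Number of internal vertices on the rightmost path (right spine). -/
def rightSpine : PBT → ℕ
  | leaf => 0
  | node _ r => rightSpine r + 1

/-- The left comb with `p` internal vertices. -/
def leftComb : ℕ → PBT
  | 0 => leaf
  | p + 1 => node (leftComb p) leaf

/-- The right comb with `q` internal vertices. -/
def rightComb : ℕ → PBT
  | 0 => leaf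
  | q + 1 => node leaf (rightComb q)

/-- The list of all factorizations `t = u ∖ v` (each exactly once). -/
def underFactors : PBT → List (PBT × PBT)
  | leaf => [(leaf, leaf)]
  | node l r => (leaf, node l r) :: (underFactors r).map (fun p => (node l p.1, p.2))

/-- The list of all factorizations `t = u / v` (each exactly once). -/
def overFactors : PBT → List (PBT × PBT)
  | leaf => [(leaf, leaf)]
  | node l r => (node l r, leaf) :: (overFactors l).map (fun p => (p.1, node p.2 r))

/-- Convolution of tree-expanded series dual to the over product:
`(A / B)_w = Σ_{s / t = w} A_s B_t`. -/
def overConv {R : Type*} [CommRing R] (f g : PBT → R) (w : PBT) : R :=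
  ((overFactors w).map (fun p => f p.1 * g p.2)).sum

/-- Convolution of tree-expanded series dual to the under product:
`(A ∖ B)_w = Σ_{s ∖ t = w} A_s B_t`. -/
def underConv {R : Type*} [CommRing R] (f g : PBT → R) (w : PBT) : R :=
  ((underFactors w).map (fun p => f p.1 * g p.2)).sum

/-- The list of all planar binary trees with `n` internal vertices. -/
def treesOfSize : ℕ → List PBT
  | 0 => [leaf]
  | n + 1 =>
    (List.range (n + 1)).attach.flatMap (fun i =>
      (treesOfSize i.1).flatMap (fun l =>
        (treesOfSize (n - i.1)).map (fun r => node l r)))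
  termination_by n => n
  decreasing_by
  · exact Nat.lt_succ_of_le (Nat.sub_le _ _)
  · exact List.mem_range.mp i.2

/-- `treePow B t` is the series `B^t = μ_t(B,…,B)`, the substitution of the
series `B` in all internal vertices of `t` (duplicial operad composition),
using the decomposition `l ∨ r = (l / Y) ∖ r`. -/
def treePow {R : Type*} [CommRing R] (B : PBT → R) : PBT → PBT → R
  | leaf => fun w => if w = leaf then 1 else 0
  | node l r => underConv (overConv (treePow B l) B) (treePow B r)

/-- Composition of tree-expanded series: `(A ∘ B)_w = Σ_t A_t (B^t)_w`,
where only trees with at most `|w|` vertices can contribute. -/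
def comp {R : Type*} [CommRing R] (A B : PBT → R) (w : PBT) : R :=
  (((List.range (size w + 1)).flatMap treesOfSize).map
    (fun t => A t * treePow B t w)).sum

/-- The series reduced to the one-vertex tree `Y`. -/
def Yser {R : Type*} [CommRing R] : PBT → R :=
  fun t => if t = node leaf leaf then 1 else 0

/-- The series reduced to the root tree `|` (unit for the over/under products). -/
def unitSer {R : Type*} [CommRing R] : PBT → R :=
  fun t => if t = leaf then 1 else 0

/-- Suspension of a tree-expanded series: the coefficient on a tree with `n`
internal vertices is multiplied by `(-1)^(n-1)`. -/
def susp {R : Type*} [CommRing R] (A : PBT → R) : PBT → R :=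
  fun t => (-1 : R) ^ (size t + 1) * A t

/-- One covering step of the Tamari order: a right rotation
`(a ∨ b) ∨ c ⟶ a ∨ (b ∨ c)` somewhere in the tree. -/
inductive TamariStep : PBT → PBT → Prop
  | rot (a b c : PBT) : TamariStep (node (node a b) c) (node a (node b c))
  | left {l l' : PBT} (r : PBT) : TamariStep l l' → TamariStep (node l r) (node l' r)
  | right (l : PBT) {r r' : PBT} : TamariStep r r' → TamariStep (node l r) (node l r')

/-- The Tamari partial order on planar binary trees. -/
def tle : PBT → PBT → Prop := Relation.ReflTransGen TamariStep

end PBT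

/-!
The solution factors as `B = L / Y ∖ R`, with coefficient `L_l R_r` on the tree `l ∨ r`,
where `L = Σ_p (-w)^p c_p` and `R = Σ_q (-1)^q d_q`. These satisfy `L = | - w (Y/L)` and
`R = | - R∖Y`, and the terms `Y/B`, `B∖Y`, `Y/B∖Y` of the equation become `(Y/L) / Y ∖ R`,
`L / Y ∖ (R∖Y)` and `(Y/L) / Y ∖ (R∖Y)`, so the equation reduces to a ring identity between
coefficients. The solution is unique because the right-hand side of the equation at `t` only
involves coefficients of `B` on trees with fewer vertices.
-/

namespace PBT

variable {R : Type*} [CommRing R]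

lemma overConv_leaf (f g : PBT → R) : overConv f g leaf = f leaf * g leaf := by
  simp [overConv, overFactors]

lemma underConv_leaf (f g : PBT → R) : underConv f g leaf = f leaf * g leaf := by
  simp [underConv, underFactors]

lemma overConv_node (f g : PBT → R) (l r : PBT) :
    overConv f g (node l r) = f (node l r) * g leaf + overConv f (fun v => g (node v r)) l := by
  simp [overConv, overFactors, Function.comp_def]

lemma underConv_node (f g : PBT → R) (l r : PBT) :
    underConv f g (node l r) = f leaf * g (node l r) + underConv (fun u => f (node l u)) g r := by
  simp [underConv, underFactors, Function.comp_def]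

lemma overConv_const_mul (f g : PBT → R) (c : R) (t : PBT) :
    overConv f (fun v => c * g v) t = c * overConv f g t := by
  simp [overConv, ← List.sum_map_mul_left, mul_left_comm]

lemma overConv_mul_const (f g : PBT → R) (c : R) (t : PBT) :
    overConv f (fun v => g v * c) t = overConv f g t * c := by
  simp [overConv, ← List.sum_map_mul_right, mul_assoc]

lemma underConv_const_mul (f g : PBT → R) (c : R) (t : PBT) :
    underConv (fun u => c * f u) g t = c * underConv f g t := by
  simp [underConv, ← List.sum_map_mul_left, mul_assoc]

lemma unitSer_leaf : unitSer leaf = (1 : R) := by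
  simp [unitSer]

lemma unitSer_node (l r : PBT) : unitSer (node l r) = (0 : R) := by
  simp [unitSer]

lemma Yser_leaf : Yser leaf = (0 : R) := by
  simp [Yser]

lemma Yser_node (l r : PBT) : Yser (node l r) = (unitSer l * unitSer r : R) := by
  cases l <;> cases r <;> simp [Yser, unitSer]

def leftCombSer (w : R) : PBT → R
  | leaf => 1
  | node l leaf => -w * leftCombSer w l
  | node _ (node _ _) => 0

def rightCombSer : PBT → R
  | leaf => 1
  | node leaf r => -rightCombSer r
  | node (node _ _) _ => 0

lemma leftCombSer_leftComb (w : R) (p : ℕ) : leftCombSer w (leftComb p) = (-w) ^ p := by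
  induction p with
  | zero => simp [leftComb, leftCombSer]
  | succ p ih => simp [leftComb, leftCombSer, ih, pow_succ, mul_comm]

lemma rightCombSer_rightComb (q : ℕ) : rightCombSer (rightComb q) = ((-1) ^ q : R) := by
  induction q with
  | zero => simp [rightComb, rightCombSer]
  | succ q ih => simp [rightComb, rightCombSer, ih, pow_succ]

lemma leftCombSer_eq_zero (w : R) {t : PBT} (ht : ∀ p, t ≠ leftComb p) :
    leftCombSer w t = 0 := by
  induction t with
  | leaf => exact absurd rfl (ht 0)
  | node l r ihl =>
    cases r with
    | leaf => simp [leftCombSer, ihl fun p h => ht (p + 1) (by rw [h]; rfl)]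
    | node => rfl

lemma rightCombSer_eq_zero {t : PBT} (ht : ∀ q, t ≠ rightComb q) :
    rightCombSer t = (0 : R) := by
  induction t with
  | leaf => exact absurd rfl (ht 0)
  | node l r _ ihr =>
    cases l with
    | leaf => simp [rightCombSer, ihr fun q h => ht (q + 1) (by rw [h]; rfl)]
    | node => rfl

lemma leftCombSer_eq_unitSer_sub (w : R) (t : PBT) :
    leftCombSer w t = unitSer t - w * overConv Yser (leftCombSer w) t := by
  induction t with
  | leaf => simp [leftCombSer, unitSer_leaf, overConv_leaf, Yser_leaf]
  | node l r ihl =>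
    rw [overConv_node]
    cases r with
    | leaf =>
      simp only [leftCombSer, overConv_const_mul, Yser_node, unitSer_leaf, unitSer_node]
      linear_combination (-w) * ihl
    | node => simp [leftCombSer, Yser, unitSer, overConv]

lemma rightCombSer_eq_unitSer_sub (t : PBT) :
    rightCombSer t = (unitSer t - underConv rightCombSer Yser t : R) := by
  induction t with
  | leaf => simp [rightCombSer, unitSer_leaf, underConv_leaf, Yser_leaf]
  | node l r _ ihr =>
    rw [underConv_node]
    cases l with
    | leaf =>
      have hneg : underConv (fun u => -rightCombSer u : PBT → R) Yser r
          = -underConv rightCombSer Yser r := by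
        simpa using underConv_const_mul rightCombSer (Yser : PBT → R) (-1) r
      simp only [rightCombSer, hneg, Yser_node, unitSer_leaf, unitSer_node]
      linear_combination (-1) * ihr
    | node => simp [rightCombSer, Yser, unitSer, underConv]

def combSer (w : R) : PBT → R
  | leaf => 0
  | node l r => leftCombSer w l * rightCombSer r

lemma under_overProd_Y (u v : PBT) : under (overProd u (node leaf leaf)) v = node u v := rfl

lemma combSer_eq_zero (w : R) {t : PBT} (ht : ∀ p q, t ≠ node (leftComb p) (rightComb q)) :
    combSer w t = 0 := by
  cases t with
  | leaf => rfl
  | node l r =>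
    rcases em (∃ p, l = leftComb p) with ⟨p, rfl⟩ | hl
    · simp [combSer, rightCombSer_eq_zero fun q hq => ht p q (congrArg _ hq)]
    · simp [combSer, leftCombSer_eq_zero w (not_exists.mp hl)]

lemma overConv_Yser_combSer_node (w : R) (l r : PBT) :
    overConv Yser (combSer w) (node l r) = overConv Yser (leftCombSer w) l * rightCombSer r := by
  simp [overConv_node, combSer, overConv_mul_const]

def fixedPointMap (w : R) (B : PBT → R) (t : PBT) : R :=
  Yser t - w * overConv Yser B t - underConv B Yser t - w * underConv (overConv Yser B) Yser t

lemma combSer_eq_fixedPointMap (w : R) (t : PBT) :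
    combSer w t = fixedPointMap w (combSer w) t := by
  cases t with
  | leaf => simp [fixedPointMap, combSer, overConv_leaf, underConv_leaf, Yser_leaf]
  | node l r =>
    simp only [fixedPointMap, underConv_node, overConv_Yser_combSer_node, overConv_leaf, combSer,
      underConv_const_mul, Yser_node]
    linear_combination
      (rightCombSer r + underConv rightCombSer Yser r) * leftCombSer_eq_unitSer_sub w l
        + unitSer l * rightCombSer_eq_unitSer_sub (R := R) r

lemma overConv_Yser_congr {f g : PBT → R} {t : PBT} (h : ∀ s, size s < size t → f s = g s) :
    overConv Yser f t = overConv Yser g t := by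
  induction t generalizing f g with
  | leaf => simp [overConv_leaf, Yser_leaf]
  | node l r ihl _ =>
    rw [overConv_node, overConv_node, h leaf (by simp [size]),
      ihl fun s hs => h _ (by simp only [size]; omega)]

lemma underConv_Yser_congr {f g : PBT → R} {t : PBT} (h : ∀ s, size s < size t → f s = g s) :
    underConv f Yser t = underConv g Yser t := by
  induction t generalizing f g with
  | leaf => simp [underConv_leaf, Yser_leaf]
  | node l r _ ihr =>
    rw [underConv_node, underConv_node, h leaf (by simp [size]),
      ihr fun s hs => h _ (by simp only [size]; omega)]

lemma fixedPointMap_congr (w : R) {B B' : PBT → R} {t : PBT}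
    (h : ∀ s, size s < size t → B s = B' s) : fixedPointMap w B t = fixedPointMap w B' t := by
  simp only [fixedPointMap, overConv_Yser_congr h, underConv_Yser_congr h,
    underConv_Yser_congr fun s hs => overConv_Yser_congr fun s' hs' => h s' (hs'.trans hs)]

lemma eq_of_forall_eq_fixedPointMap {w : R} {B B' : PBT → R}
    (hB : ∀ t, B t = fixedPointMap w B t) (hB' : ∀ t, B' t = fixedPointMap w B' t) :
    B = B' := by
  funext t
  induction t using (measure size).wf.induction with
  | _ t ih => rw [hB, hB']; exact fixedPointMap_congr w ih

end PBT

open PBT Polynomial in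
theorem series_B_coefficients_general (B : PBT → Polynomial ℚ)
    (hB : ∀ t : PBT, B t = Yser t - X * overConv Yser B t - underConv B Yser t
        - X * underConv (overConv Yser B) Yser t) :
    (∀ p q : ℕ,
      B (under (overProd (leftComb p) (PBT.node PBT.leaf PBT.leaf)) (rightComb q))
        = (-1 : Polynomial ℚ) ^ (p + q) * X ^ p) ∧
    (∀ t : PBT,
      (∀ p q : ℕ,
        t ≠ under (overProd (leftComb p) (PBT.node PBT.leaf PBT.leaf)) (rightComb q)) →
      B t = 0) := by
  obtain rfl : B = combSer X := eq_of_forall_eq_fixedPointMap hB (combSer_eq_fixedPointMap X)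
  refine ⟨fun p q => ?_, fun t ht => combSer_eq_zero X ?_⟩
  · rw [under_overProd_Y, combSer, leftCombSer_leftComb, rightCombSer_rightComb]
    ring
  · simpa only [under_overProd_Y] using ht

open PBT Polynomial in
/-- the series `B = Y - w(Y/B) - (B∖Y) - w(Y/B∖Y)` equals
`Σ_{p,q ≥ 0} (-1)^{p+q} w^p (c_p / Y ∖ d_q)`, where `c_p` is the left comb
with `p` vertices and `d_q` the right comb with `q` vertices
(note `c_p / Y ∖ d_q = node c_p d_q`). -/
theorem series_B_coefficients (B : PBT → Polynomial ℚ)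
    (hB0 : B PBT.leaf = 0)
    (hB : ∀ t : PBT, B t = Yser t - X * overConv Yser B t - underConv B Yser t
        - X * underConv (overConv Yser B) Yser t) :
    (∀ p q : ℕ,
      B (under (overProd (leftComb p) (PBT.node PBT.leaf PBT.leaf)) (rightComb q))
        = (-1 : Polynomial ℚ) ^ (p + q) * X ^ p) ∧
    (∀ t : PBT,
      (∀ p q : ℕ,
        t ≠ under (overProd (leftComb p) (PBT.node PBT.leaf PBT.leaf)) (rightComb q)) →
      B t = 0) :=
  series_B_coefficients_general B hB
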